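/- Let n be a positive natural number and ε > 0, and define Γ_ε(x,y) = (2πε²)^{-n/2} · exp(−‖x−y‖₂²/(2ε²)). Set κ = ∫_{ℝⁿ} ‖z‖₂ Γ_ε(0,z) dz. Then for all smooth compactly supported functions u, v : ℝⁿ → ℝ, the nonlocal bilinear term satisfies |∫_{ℝⁿ} ∫_{ℝⁿ} (u(y) − u(x)) Γ_ε(x,y) dy · v(x) dx| ≤ κ · ‖∇u‖_{L²(ℝⁿ)} · ‖v‖_{L²(ℝⁿ)}. -/

import Mathlib

open Real MeasureTheory ENNReal

/-- The Gaussian kernel `Γ_ν(x,y) = (2πν²)^{-n/2} · exp(−‖x−y‖₂²/(2ν²))` on `ℝⁿ`. -/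
noncomputable def gaussK (n : ℕ) (ν : ℝ) (x y : EuclideanSpace ℝ (Fin n)) : ℝ :=
  (2 * π * ν ^ 2) ^ (-(n : ℝ) / 2) * Real.exp (-‖x - y‖ ^ 2 / (2 * ν ^ 2))

section aux
variable {n : ℕ} {ε : ℝ}

lemma gaussK_nonneg (n : ℕ) (ε : ℝ) (x y : EuclideanSpace ℝ (Fin n)) : 0 ≤ gaussK n ε x y := by
  unfold gaussK
  positivity

lemma gaussK_translate (x z : EuclideanSpace ℝ (Fin n)) :
    gaussK n ε x (x + z) = gaussK n ε 0 z := by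
  have h : x - (x + z) = 0 - z := by abel
  simp [gaussK, h]

lemma gaussK_cont2 : Continuous (fun p : EuclideanSpace ℝ (Fin n) × EuclideanSpace ℝ (Fin n) =>
    gaussK n ε p.1 p.2) := by
  unfold gaussK
  fun_prop

lemma gaussK_cont : Continuous (fun z : EuclideanSpace ℝ (Fin n) => gaussK n ε 0 z) := by
  unfold gaussK
  fun_prop

lemma integrable_exp_norm_sq (n : ℕ) {a : ℝ} (ha : 0 < a) :
    Integrable (fun v : EuclideanSpace ℝ (Fin n) => Real.exp (-a * ‖v‖ ^ 2)) := by
  have h := GaussianFourier.integrable_cexp_neg_mul_sq_norm_add (V := EuclideanSpace ℝ (Fin n))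
      (b := (a : ℂ)) (by simpa using ha) 0 0
  have h2 := h.norm
  refine h2.congr ?_
  filter_upwards with v
  simp [Complex.norm_exp]
  left
  norm_cast

lemma integrable_norm_mul_exp (n : ℕ) {b : ℝ} (hb : 0 < b) :
    Integrable (fun v : EuclideanSpace ℝ (Fin n) => ‖v‖ * Real.exp (-b * ‖v‖ ^ 2)) := by
  have hI := (integrable_exp_norm_sq n (half_pos hb)).const_mul (1 + 2 / b)
  refine hI.mono' (continuous_norm.mul (by fun_prop)).aestronglyMeasurable ?_
  filter_upwards with v
  set r := ‖v‖ with hr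
  have hr0 : (0:ℝ) ≤ r := norm_nonneg v
  have hs : 0 ≤ b / 2 * r ^ 2 := by positivity
  have h1 : (1:ℝ) ≤ Real.exp (b / 2 * r ^ 2) := Real.one_le_exp hs
  have h2 : b / 2 * r ^ 2 ≤ Real.exp (b / 2 * r ^ 2) :=
    le_trans (by linarith) (Real.add_one_le_exp _)
  have hbne : b ≠ 0 := ne_of_gt hb
  have hr2 : r ^ 2 = 2 / b * (b / 2 * r ^ 2) := by field_simp
  have hrle : r ≤ 1 + r ^ 2 := by nlinarith [sq_nonneg (r - 1)]
  have h3 : r ≤ (1 + 2 / b) * Real.exp (b / 2 * r ^ 2) := by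
    have h4 : 2 / b * (b / 2 * r ^ 2) ≤ 2 / b * Real.exp (b / 2 * r ^ 2) := by
      apply mul_le_mul_of_nonneg_left h2 (by positivity)
    calc r ≤ 1 + r ^ 2 := hrle
    _ = 1 + 2 / b * (b / 2 * r ^ 2) := by rw [← hr2]
    _ ≤ Real.exp (b / 2 * r ^ 2) + 2 / b * Real.exp (b / 2 * r ^ 2) := by linarith
    _ = (1 + 2 / b) * Real.exp (b / 2 * r ^ 2) := by ring
  have hrs : r * Real.exp (-(b / 2) * r ^ 2) ≤ 1 + 2 / b := by
    rw [neg_mul, Real.exp_neg, mul_comm r, ← div_eq_inv_mul, div_le_iff₀ (Real.exp_pos _)]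
    linarith [h3]
  have hsplit : Real.exp (-b * r ^ 2)
      = Real.exp (-(b / 2) * r ^ 2) * Real.exp (-(b / 2) * r ^ 2) := by
    rw [← Real.exp_add]; ring_nf
  rw [Real.norm_eq_abs, abs_of_nonneg (by positivity)]
  calc r * Real.exp (-b * r ^ 2)
      = r * Real.exp (-(b / 2) * r ^ 2) * Real.exp (-(b / 2) * r ^ 2) := by rw [hsplit]; ring
  _ ≤ (1 + 2 / b) * Real.exp (-(b / 2) * r ^ 2) :=
      mul_le_mul_of_nonneg_right hrs (Real.exp_pos _).le
  _ = (1 + 2 / b) * Real.exp (-(b / 2) * ‖v‖ ^ 2) := rfl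

lemma integrable_norm_gauss (n : ℕ) (hε : 0 < ε) :
    Integrable (fun z : EuclideanSpace ℝ (Fin n) => ‖z‖ * gaussK n ε 0 z) := by
  have hb : (0:ℝ) < 1 / (2 * ε ^ 2) := by positivity
  have h := (integrable_norm_mul_exp n hb).const_mul ((2 * π * ε ^ 2) ^ (-(n : ℝ) / 2))
  refine h.congr ?_
  filter_upwards with z
  simp only [gaussK, zero_sub, norm_neg]
  ring_nf


lemma gaussK_cont_left {n : ℕ} {ε : ℝ} (x : EuclideanSpace ℝ (Fin n)) :
    Continuous (fun y : EuclideanSpace ℝ (Fin n) => gaussK n ε x y) := by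
  unfold gaussK
  fun_prop

end aux


section aux2
variable {n : ℕ}

lemma grad_norm_eq (u : EuclideanSpace ℝ (Fin n) → ℝ) (x : EuclideanSpace ℝ (Fin n)) :
    ‖gradient u x‖ = ‖fderiv ℝ u x‖ := by
  rw [gradient]
  exact LinearIsometryEquiv.norm_map _ _

lemma ftc_bound {u : EuclideanSpace ℝ (Fin n) → ℝ} (hu : ContDiff ℝ (⊤ : ℕ∞) u)
    (x z : EuclideanSpace ℝ (Fin n)) :
    |u (x + z) - u x| ≤ ‖z‖ * ∫ t in (0:ℝ)..1, ‖fderiv ℝ u (x + t • z)‖ := by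
  have hdiff : Differentiable ℝ u := hu.differentiable (by simp)
  have hfc : Continuous (fderiv ℝ u) := hu.continuous_fderiv (by simp)
  have hline : Continuous fun t : ℝ => x + t • z := by fun_prop
  have hd : ∀ t : ℝ, HasDerivAt (fun s : ℝ => u (x + s • z)) (fderiv ℝ u (x + t • z) z) t := by
    intro t
    have h1 : HasDerivAt (fun s : ℝ => x + s • z) z t := by
      simpa using ((hasDerivAt_id t).smul_const z).const_add x
    exact ((hdiff (x + t • z)).hasFDerivAt).comp_hasDerivAt t h1
  have hcont : Continuous fun t : ℝ => fderiv ℝ u (x + t • z) z :=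
    (hfc.comp hline).clm_apply continuous_const
  have heq : u (x + z) - u x = ∫ t in (0:ℝ)..1, fderiv ℝ u (x + t • z) z := by
    rw [intervalIntegral.integral_eq_sub_of_hasDerivAt (fun t _ => hd t)
      (hcont.intervalIntegrable 0 1)]
    simp
  rw [heq]
  calc |∫ t in (0:ℝ)..1, fderiv ℝ u (x + t • z) z|
      ≤ ∫ t in (0:ℝ)..1, ‖fderiv ℝ u (x + t • z) z‖ := by
        rw [← Real.norm_eq_abs]
        exact intervalIntegral.norm_integral_le_integral_norm zero_le_one
  _ ≤ ∫ t in (0:ℝ)..1, ‖fderiv ℝ u (x + t • z)‖ * ‖z‖ := by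
      apply intervalIntegral.integral_mono_on zero_le_one
        (hcont.norm.intervalIntegrable 0 1)
        (((((hfc.comp hline).norm).mul continuous_const)).intervalIntegrable 0 1)
      intro t _
      exact ContinuousLinearMap.le_opNorm _ _
  _ = ‖z‖ * ∫ t in (0:ℝ)..1, ‖fderiv ℝ u (x + t • z)‖ := by
      rw [intervalIntegral.integral_mul_const]; ring

end aux2


section helpers

lemma enn_sq_half (a : ℝ≥0∞) : (a ^ (1/2 : ℝ)) ^ 2 = a := by
  rw [← ENNReal.rpow_natCast (a ^ (1/2 : ℝ)) 2, ← ENNReal.rpow_mul]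
  norm_num

lemma enn_half_sq (a : ℝ≥0∞) : (a ^ 2) ^ (1/2 : ℝ) = a := by
  rw [← ENNReal.rpow_natCast a 2, ← ENNReal.rpow_mul]
  norm_num

lemma enn_half_mul_self (a : ℝ≥0∞) : a ^ (1/2 : ℝ) * a ^ (1/2 : ℝ) = a := by
  rw [← sq, enn_sq_half]

lemma lint_CS {α : Type*} [MeasurableSpace α] (μ : Measure α) {f g : α → ℝ≥0∞}
    (hf : AEMeasurable f μ) (hg : AEMeasurable g μ) :
    ∫⁻ a, f a * g a ∂μ
      ≤ (∫⁻ a, f a ^ 2 ∂μ) ^ (1/2 : ℝ) * (∫⁻ a, g a ^ 2 ∂μ) ^ (1/2 : ℝ) := by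
  have hconj : Real.HolderConjugate 2 2 := by constructor <;> norm_num
  have h := ENNReal.lintegral_mul_le_Lp_mul_Lq μ hconj hf hg
  simp only [Pi.mul_apply] at h
  refine h.trans_eq ?_
  congr 1 <;> congr 1 <;> [skip; skip] <;> first
    | (congr 1; funext a; rw [← ENNReal.rpow_natCast]; norm_num)

lemma ofReal_sqrt_eq {s : ℝ} (hs : 0 ≤ s) :
    ENNReal.ofReal (Real.sqrt s) = (ENNReal.ofReal s) ^ (1/2 : ℝ) := by
  rw [Real.sqrt_eq_rpow, ← ENNReal.ofReal_rpow_of_nonneg hs (by norm_num)]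

end helpers

set_option maxHeartbeats 1000000 in
/-- The nonlocal bilinear term is bounded by `κ ‖∇u‖_{L²} ‖v‖_{L²}` where
`κ = ∫ ‖z‖ Γ_ε(0,z) dz`, for all smooth compactly supported `u, v`. -/
theorem nonlocal_term_bound (n : ℕ) (hn : 0 < n) (ε : ℝ) (hε : 0 < ε)
    (u v : EuclideanSpace ℝ (Fin n) → ℝ)
    (hu : ContDiff ℝ (⊤ : ℕ∞) u) (hus : HasCompactSupport u)
    (hv : ContDiff ℝ (⊤ : ℕ∞) v) (hvs : HasCompactSupport v) :
    |∫ x, (∫ y, (u y - u x) * gaussK n ε x y) * v x|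
      ≤ (∫ z, ‖z‖ * gaussK n ε 0 z) *
          Real.sqrt (∫ x, ‖gradient u x‖ ^ 2) * Real.sqrt (∫ x, v x ^ 2) := by
  classical
  have hgrad : ∀ x : EuclideanSpace ℝ (Fin n), ‖gradient u x‖ = ‖fderiv ℝ u x‖ :=
    grad_norm_eq u
  simp_rw [hgrad]
  -- basic continuity facts
  have hg_cont : Continuous fun x : EuclideanSpace ℝ (Fin n) => ‖fderiv ℝ u x‖ :=
    (hu.continuous_fderiv (by simp)).norm
  have hg_supp : HasCompactSupport fun x : EuclideanSpace ℝ (Fin n) => ‖fderiv ℝ u x‖ :=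
    (hus.fderiv ℝ).norm
  have hg2_int : Integrable fun x : EuclideanSpace ℝ (Fin n) => ‖fderiv ℝ u x‖ ^ 2 :=
    (Continuous.integrable_of_hasCompactSupport (f := fun x => ‖fderiv ℝ u x‖ ^ 2) (hg_cont.pow 2)
      (hg_supp.comp_left (g := fun r : ℝ => r ^ 2) (by norm_num)))
  have hv2_int : Integrable fun x : EuclideanSpace ℝ (Fin n) => v x ^ 2 :=
    (Continuous.integrable_of_hasCompactSupport (f := fun x => v x ^ 2) ((hv.continuous).pow 2)
      (hvs.comp_left (g := fun r : ℝ => r ^ 2) (by norm_num)))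
  have hg2_nonneg : (0:ℝ) ≤ ∫ x, ‖fderiv ℝ u x‖ ^ 2 :=
    integral_nonneg fun x => sq_nonneg _
  have hv2_nonneg : (0:ℝ) ≤ ∫ x, v x ^ 2 := integral_nonneg fun x => sq_nonneg _
  -- the kernel weight
  have hκ_int : Integrable fun z : EuclideanSpace ℝ (Fin n) => ‖z‖ * gaussK n ε 0 z :=
    integrable_norm_gauss n hε
  have hκ_nonneg : (0:ℝ) ≤ ∫ z, ‖z‖ * gaussK n ε 0 z :=
    integral_nonneg fun z => mul_nonneg (norm_nonneg _) (gaussK_nonneg n ε 0 z)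
  set κ : ℝ := ∫ z, ‖z‖ * gaussK n ε 0 z with hκ_def
  set w : EuclideanSpace ℝ (Fin n) → ℝ≥0∞ :=
    fun z => ENNReal.ofReal (‖z‖ * gaussK n ε 0 z) with hw_def
  have hw_meas : Measurable w := (continuous_norm.mul gaussK_cont).measurable.ennreal_ofReal
  have hK_eq : ∫⁻ z, w z = ENNReal.ofReal κ := by
    rw [hκ_def, ofReal_integral_eq_lintegral_ofReal hκ_int
      (Filter.Eventually.of_forall fun z =>
        mul_nonneg (norm_nonneg _) (gaussK_nonneg n ε 0 z))]
  set K : ℝ≥0∞ := ENNReal.ofReal κ with hK_def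
  -- G, A
  set G : EuclideanSpace ℝ (Fin n) → ℝ≥0∞ :=
    fun x => ENNReal.ofReal ‖fderiv ℝ u x‖ with hG_def
  have hG_cont : Continuous G := ENNReal.continuous_ofReal.comp hg_cont
  set A : ℝ≥0∞ := ∫⁻ x, G x ^ 2 with hA_def
  have hA_eq : A = ENNReal.ofReal (∫ x, ‖fderiv ℝ u x‖ ^ 2) := by
    rw [ofReal_integral_eq_lintegral_ofReal hg2_int
      (Filter.Eventually.of_forall fun x => sq_nonneg _), hA_def]
    congr 1
    funext x
    rw [hG_def, ← ENNReal.ofReal_pow (norm_nonneg _)]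
  -- F
  set F : EuclideanSpace ℝ (Fin n) → ℝ :=
    fun x => ∫ y, (u y - u x) * gaussK n ε x y with hF_def
  have hF_sm : StronglyMeasurable F := by
    apply StronglyMeasurable.integral_prod_right'
      (f := fun p : EuclideanSpace ℝ (Fin n) × EuclideanSpace ℝ (Fin n) =>
        (u p.2 - u p.1) * gaussK n ε p.1 p.2)
    exact (((hu.continuous.comp continuous_snd).sub
      (hu.continuous.comp continuous_fst)).mul gaussK_cont2).stronglyMeasurable
  -- T
  set T : EuclideanSpace ℝ (Fin n) → EuclideanSpace ℝ (Fin n) → ℝ≥0∞ :=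
    fun x z => ∫⁻ t in Set.Ioc (0:ℝ) 1, G (x + t • z) ^ 2 with hT_def
  have hGt_cont : ∀ z : EuclideanSpace ℝ (Fin n),
      Continuous fun p : EuclideanSpace ℝ (Fin n) × ℝ => G (p.1 + p.2 • z) ^ 2 :=
    fun z => (ENNReal.continuous_pow 2).comp
      (hG_cont.comp (continuous_fst.add (continuous_snd.smul continuous_const)))
  have hT_meas : Measurable fun p : EuclideanSpace ℝ (Fin n) × EuclideanSpace ℝ (Fin n) =>
      T p.1 p.2 := by
    apply Measurable.lintegral_prod_right
      (f := fun (p : EuclideanSpace ℝ (Fin n) × EuclideanSpace ℝ (Fin n)) (t : ℝ) =>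
        G (p.1 + t • p.2) ^ 2)
    apply Measurable.pow_const
    exact (hG_cont.comp (by fun_prop)).measurable
  -- pointwise bound on the inner integral
  have P1 : ∀ x : EuclideanSpace ℝ (Fin n),
      ENNReal.ofReal ‖F x‖ ≤ ∫⁻ z, w z * T x z ^ (1/2 : ℝ) := by
    intro x
    have hcH : Continuous fun y : EuclideanSpace ℝ (Fin n) =>
        (u y - u x) * gaussK n ε x y :=
      (hu.continuous.sub continuous_const).mul (gaussK_cont_left x)
    have hH_meas : Measurable fun y : EuclideanSpace ℝ (Fin n) =>
        ENNReal.ofReal ‖(u y - u x) * gaussK n ε x y‖ :=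
      hcH.norm.measurable.ennreal_ofReal
    have e1 : ENNReal.ofReal ‖F x‖
        ≤ ∫⁻ y, ENNReal.ofReal ‖(u y - u x) * gaussK n ε x y‖ := by
      rw [hF_def, ofReal_norm]
      refine (enorm_integral_le_lintegral_enorm _).trans_eq ?_
      simp_rw [ofReal_norm]
    have e2 : (∫⁻ y, ENNReal.ofReal ‖(u y - u x) * gaussK n ε x y‖)
        = ∫⁻ z, ENNReal.ofReal ‖(u (x + z) - u x) * gaussK n ε x (x + z)‖ :=
      ((measurePreserving_add_left volume x).lintegral_comp hH_meas).symm
    have e4 : ∀ z : EuclideanSpace ℝ (Fin n),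
        ENNReal.ofReal ‖(u (x + z) - u x) * gaussK n ε x (x + z)‖
          ≤ w z * T x z ^ (1/2 : ℝ) := by
      intro z
      have hJ_nonneg : (0:ℝ) ≤ ∫ t in (0:ℝ)..1, ‖fderiv ℝ u (x + t • z)‖ :=
        intervalIntegral.integral_nonneg zero_le_one fun t _ => norm_nonneg _
      have step1 : ‖(u (x + z) - u x) * gaussK n ε x (x + z)‖
          ≤ (‖z‖ * gaussK n ε 0 z) * ∫ t in (0:ℝ)..1, ‖fderiv ℝ u (x + t • z)‖ := by
        rw [norm_mul, Real.norm_eq_abs, Real.norm_eq_abs, gaussK_translate,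
          abs_of_nonneg (gaussK_nonneg n ε 0 z)]
        calc |u (x + z) - u x| * gaussK n ε 0 z
            ≤ (‖z‖ * ∫ t in (0:ℝ)..1, ‖fderiv ℝ u (x + t • z)‖) * gaussK n ε 0 z :=
              mul_le_mul_of_nonneg_right (ftc_bound hu x z) (gaussK_nonneg n ε 0 z)
        _ = (‖z‖ * gaussK n ε 0 z) * ∫ t in (0:ℝ)..1, ‖fderiv ℝ u (x + t • z)‖ := by ring
      have step2 : ENNReal.ofReal (∫ t in (0:ℝ)..1, ‖fderiv ℝ u (x + t • z)‖)
          ≤ T x z ^ (1/2 : ℝ) := by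
        rw [intervalIntegral.integral_of_le zero_le_one]
        have hint : IntegrableOn (fun t : ℝ => ‖fderiv ℝ u (x + t • z)‖)
            (Set.Ioc (0:ℝ) 1) volume :=
          (hg_cont.comp (by fun_prop)).integrableOn_Ioc
        rw [ofReal_integral_eq_lintegral_ofReal hint
          (Filter.Eventually.of_forall fun t => norm_nonneg _)]
        have hGm : Measurable fun t : ℝ => G (x + t • z) :=
          (hG_cont.comp (by fun_prop)).measurable
        calc ∫⁻ t in Set.Ioc (0:ℝ) 1, ENNReal.ofReal ‖fderiv ℝ u (x + t • z)‖
            = ∫⁻ t in Set.Ioc (0:ℝ) 1, G (x + t • z) * 1 := by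
              simp [hG_def]
        _ ≤ (∫⁻ t in Set.Ioc (0:ℝ) 1, G (x + t • z) ^ 2) ^ (1/2 : ℝ)
              * (∫⁻ t in Set.Ioc (0:ℝ) 1, (1:ℝ≥0∞) ^ 2) ^ (1/2 : ℝ) :=
              lint_CS _ hGm.aemeasurable aemeasurable_const
        _ = T x z ^ (1/2 : ℝ) := by
              rw [hT_def]
              simp [Real.volume_Ioc]
      calc ENNReal.ofReal ‖(u (x + z) - u x) * gaussK n ε x (x + z)‖
          ≤ ENNReal.ofReal ((‖z‖ * gaussK n ε 0 z)
              * ∫ t in (0:ℝ)..1, ‖fderiv ℝ u (x + t • z)‖) :=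
            ENNReal.ofReal_le_ofReal step1
      _ = w z * ENNReal.ofReal (∫ t in (0:ℝ)..1, ‖fderiv ℝ u (x + t • z)‖) := by
            rw [hw_def, ENNReal.ofReal_mul
              (mul_nonneg (norm_nonneg _) (gaussK_nonneg n ε 0 z))]
      _ ≤ w z * T x z ^ (1/2 : ℝ) := mul_le_mul_right step2 _
    calc ENNReal.ofReal ‖F x‖
        ≤ ∫⁻ y, ENNReal.ofReal ‖(u y - u x) * gaussK n ε x y‖ := e1
    _ = ∫⁻ z, ENNReal.ofReal ‖(u (x + z) - u x) * gaussK n ε x (x + z)‖ := e2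
    _ ≤ ∫⁻ z, w z * T x z ^ (1/2 : ℝ) := lintegral_mono e4
  -- measurability helpers
  have hFm : Measurable fun x => ENNReal.ofReal ‖F x‖ :=
    hF_sm.measurable.norm.ennreal_ofReal
  have hVm : Measurable fun x => ENNReal.ofReal |v x| :=
    (hv.continuous.abs).measurable.ennreal_ofReal
  have hwT_meas : Measurable fun p : EuclideanSpace ℝ (Fin n) × EuclideanSpace ℝ (Fin n) =>
      w p.2 * T p.1 p.2 := (hw_meas.comp measurable_snd).mul hT_meas
  have hZ_meas : Measurable fun x => ∫⁻ z, w z * T x z :=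
    hwT_meas.lintegral_prod_right'
  have hTz_meas : ∀ z, Measurable fun x => T x z := by
    intro z
    have hrw : (fun x => T x z)
        = (fun p : EuclideanSpace ℝ (Fin n) × EuclideanSpace ℝ (Fin n) => T p.1 p.2)
          ∘ (fun x => (x, z)) := rfl
    rw [hrw]
    exact hT_meas.comp (measurable_id.prodMk measurable_const)
  have hTx_meas : ∀ x, Measurable fun z => T x z := by
    intro x
    have hrw : (fun z => T x z)
        = (fun p : EuclideanSpace ℝ (Fin n) × EuclideanSpace ℝ (Fin n) => T p.1 p.2)
          ∘ (fun z => (x, z)) := rfl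
    rw [hrw]
    exact hT_meas.comp (measurable_const.prodMk measurable_id)
  have hSx_meas : ∀ x, Measurable fun z => T x z ^ (1/2 : ℝ) := fun x =>
    (hTx_meas x).pow_const _
  -- Cauchy-Schwarz in z with weight w
  have P2x : ∀ x, (∫⁻ z, w z * T x z ^ (1/2 : ℝ)) ^ 2 ≤ K * ∫⁻ z, w z * T x z := by
    intro x
    have hsplit : ∀ z, w z * T x z ^ (1/2 : ℝ)
        = (w z ^ (1/2 : ℝ)) * ((w z ^ (1/2 : ℝ)) * T x z ^ (1/2 : ℝ)) := by
      intro z; rw [← mul_assoc, enn_half_mul_self]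
    have hwh_meas : Measurable fun z => w z ^ (1/2 : ℝ) := hw_meas.pow_const _
    calc (∫⁻ z, w z * T x z ^ (1/2 : ℝ)) ^ 2
        = (∫⁻ z, (w z ^ (1/2 : ℝ)) * ((w z ^ (1/2 : ℝ)) * T x z ^ (1/2 : ℝ))) ^ 2 := by
          simp_rw [hsplit]
    _ ≤ ((∫⁻ z, (w z ^ (1/2 : ℝ)) ^ 2) ^ (1/2 : ℝ)
          * (∫⁻ z, ((w z ^ (1/2 : ℝ)) * T x z ^ (1/2 : ℝ)) ^ 2) ^ (1/2 : ℝ)) ^ 2 :=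
          pow_le_pow_left' (lint_CS volume hwh_meas.aemeasurable
            (hwh_meas.mul (hSx_meas x)).aemeasurable) 2
    _ = (∫⁻ z, w z) * ∫⁻ z, w z * T x z := by
          rw [mul_pow, enn_sq_half, enn_sq_half]
          congr 1
          · exact lintegral_congr fun z => enn_sq_half _
          · exact lintegral_congr fun z => by rw [mul_pow, enn_sq_half, enn_sq_half]
    _ = K * ∫⁻ z, w z * T x z := by rw [hK_eq]
  -- the squared bound, integrated
  have P2 : (∫⁻ x, ENNReal.ofReal ‖F x‖ ^ 2) ≤ K * (K * A) := by
    have h1 : (∫⁻ x, ENNReal.ofReal ‖F x‖ ^ 2) ≤ ∫⁻ x, K * ∫⁻ z, w z * T x z :=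
      lintegral_mono fun x => le_trans (pow_le_pow_left' (P1 x) 2) (P2x x)
    refine h1.trans ?_
    rw [lintegral_const_mul K hZ_meas]
    refine mul_le_mul_right ?_ K
    have hswap : (∫⁻ x, ∫⁻ z, w z * T x z) = ∫⁻ z, ∫⁻ x, w z * T x z :=
      lintegral_lintegral_swap hwT_meas.aemeasurable
    rw [hswap]
    have hinner : ∀ z, (∫⁻ x, w z * T x z) = w z * A := by
      intro z
      rw [lintegral_const_mul (w z) (hTz_meas z)]
      congr 1
      calc (∫⁻ x, T x z)
          = ∫⁻ t in Set.Ioc (0:ℝ) 1, ∫⁻ x, G (x + t • z) ^ 2 :=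
            lintegral_lintegral_swap ((hGt_cont z).measurable.aemeasurable)
      _ = ∫⁻ _t in Set.Ioc (0:ℝ) 1, A := by
            refine lintegral_congr fun t => ?_
            exact (measurePreserving_add_right volume (t • z)).lintegral_comp
              (((ENNReal.continuous_pow 2).comp hG_cont).measurable)
      _ = A := by simp [Real.volume_Ioc]
    simp_rw [hinner]
    rw [lintegral_mul_const A hw_meas, hK_eq]
  -- assemble
  set B : ℝ≥0∞ := ∫⁻ x, ENNReal.ofReal |v x| ^ 2 with hB_def
  have hB_eq : B = ENNReal.ofReal (∫ x, v x ^ 2) := by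
    rw [ofReal_integral_eq_lintegral_ofReal hv2_int
      (Filter.Eventually.of_forall fun x => sq_nonneg _), hB_def]
    congr 1
    funext x
    rw [← ENNReal.ofReal_pow (abs_nonneg _), sq_abs]
  have main : (∫⁻ x, ENNReal.ofReal ‖F x * v x‖)
      ≤ ENNReal.ofReal (κ * Real.sqrt (∫ x, ‖fderiv ℝ u x‖ ^ 2)
          * Real.sqrt (∫ x, v x ^ 2)) := by
    calc (∫⁻ x, ENNReal.ofReal ‖F x * v x‖)
        = ∫⁻ x, ENNReal.ofReal ‖F x‖ * ENNReal.ofReal |v x| := by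
          refine lintegral_congr fun x => ?_
          rw [norm_mul, ENNReal.ofReal_mul (norm_nonneg _), Real.norm_eq_abs (v x)]
    _ ≤ (∫⁻ x, ENNReal.ofReal ‖F x‖ ^ 2) ^ (1/2 : ℝ) * B ^ (1/2 : ℝ) :=
          lint_CS volume hFm.aemeasurable hVm.aemeasurable
    _ ≤ (K * (K * A)) ^ (1/2 : ℝ) * B ^ (1/2 : ℝ) :=
          mul_le_mul_left (ENNReal.rpow_le_rpow P2 (by norm_num)) _
    _ = K * A ^ (1/2 : ℝ) * B ^ (1/2 : ℝ) := by
          rw [← mul_assoc K K A, ← sq,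
            ENNReal.mul_rpow_of_nonneg _ _ (by norm_num : (0:ℝ) ≤ 1/2), enn_half_sq]
    _ = ENNReal.ofReal (κ * Real.sqrt (∫ x, ‖fderiv ℝ u x‖ ^ 2)
          * Real.sqrt (∫ x, v x ^ 2)) := by
          rw [ENNReal.ofReal_mul (mul_nonneg hκ_nonneg (Real.sqrt_nonneg _)),
            ENNReal.ofReal_mul hκ_nonneg, ofReal_sqrt_eq hg2_nonneg,
            ofReal_sqrt_eq hv2_nonneg, ← hA_eq, ← hB_eq, ← hK_def]
  have h0 := norm_integral_le_lintegral_norm (μ := (volume : Measure (EuclideanSpace ℝ (Fin n))))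
    (fun x => F x * v x)
  rw [Real.norm_eq_abs] at h0
  refine h0.trans ?_
  exact ENNReal.toReal_le_of_le_ofReal
    (mul_nonneg (mul_nonneg hκ_nonneg (Real.sqrt_nonneg _)) (Real.sqrt_nonneg _)) main
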